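/- arXiv:2206.09373 — 2 statements merged into one kernel-verified Lean document; each statement's English description precedes it below -/
import Mathlib

section
/- Fix n ≥ 1 and 0 ≤ k ≤ n, and let Ω := {x ∈ ℝⁿ : |x_i| < 1 for all i}. Then v_k(0) − u_k(0) = 1/2; for every x in the closure of Ω with x ≠ 0 one has v_k(x) − u_k(x) < 1/2 (so v_k − u_k has a strict maximum over the closed cube at the origin); and v_k(x) − u_k(x) ≤ 0 for every x ∈ ∂Ω, i.e. for every x with |x_i| ≤ 1 for all i and |x_j| = 1 for at least one index j. -/
/-!
As `J` maps the first `n - k` coordinates onto the last `n - k`, in `v_k - u_k = v_k + v_{n-k} ∘ J`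
every coordinate receives both terms: `v_k - u_k = 1/2 + ∑ᵢ (|xᵢ|^{3/2}/2 - |xᵢ|)`. On `[-1, 1]`
each summand vanishes at `0`, is negative elsewhere because `|t|^{3/2} ≤ |t|`, and equals `-1/2`
where `|t| = 1`.
-/

open Real Filter Topology

open scoped Classical in
noncomputable def slF {n : ℕ} (X : Matrix (Fin n) (Fin n) ℝ) : ℝ :=
  if hX : X.IsHermitian then ∑ i, Real.arctan (hX.eigenvalues i) else 0

noncomputable def hess {n : ℕ} (φ : EuclideanSpace ℝ (Fin n) → ℝ)
    (x : EuclideanSpace ℝ (Fin n)) : Matrix (Fin n) (Fin n) ℝ :=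
  fun i j => iteratedFDeriv ℝ 2 φ x ![EuclideanSpace.single i 1, EuclideanSpace.single j 1]

def IsSubsolution {n : ℕ} (Ω : Set (EuclideanSpace ℝ (Fin n)))
    (v f : EuclideanSpace ℝ (Fin n) → ℝ) : Prop :=
  ∀ x ∈ Ω, ∀ φ : EuclideanSpace ℝ (Fin n) → ℝ,
    ContDiffAt ℝ 2 φ x → (∀ᶠ y in 𝓝 x, v y ≤ φ y) → φ x = v x → f x ≤ slF (hess φ x)

def IsSupersolution {n : ℕ} (Ω : Set (EuclideanSpace ℝ (Fin n)))
    (u f : EuclideanSpace ℝ (Fin n) → ℝ) : Prop :=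
  ∀ x ∈ Ω, ∀ ψ : EuclideanSpace ℝ (Fin n) → ℝ,
    ContDiffAt ℝ 2 ψ x → (∀ᶠ y in 𝓝 x, ψ y ≤ u y) → ψ x = u x → slF (hess ψ x) ≤ f x

noncomputable def vFun (n k : ℕ) (x : EuclideanSpace ℝ (Fin n)) : ℝ :=
  1/4 - ∑ i ∈ Finset.univ.filter (fun i : Fin n => (i : ℕ) < k), |x i|
      + ∑ i ∈ Finset.univ.filter (fun i : Fin n => k ≤ (i : ℕ)), (1/2) * |x i| ^ ((3:ℝ)/2)

noncomputable def phaseTerm (t : ℝ) : ℝ :=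
  if t = 0 then π / 2 else Real.arctan ((3/8) * |t| ^ (-(1:ℝ)/2))

noncomputable def fFun (n k : ℕ) (x : EuclideanSpace ℝ (Fin n)) : ℝ :=
  - ∑ i ∈ Finset.univ.filter (fun i : Fin n => (i : ℕ) < k), phaseTerm (x i)
  + ∑ i ∈ Finset.univ.filter (fun i : Fin n => k ≤ (i : ℕ)), phaseTerm (x i)

def revVec {n : ℕ} (x : EuclideanSpace ℝ (Fin n)) : EuclideanSpace ℝ (Fin n) :=
  WithLp.toLp 2 (fun i : Fin n => x i.rev)

noncomputable def uFun (n k : ℕ) (x : EuclideanSpace ℝ (Fin n)) : ℝ :=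
  - vFun n (n - k) (revVec x)

def exch (n : ℕ) : Matrix (Fin n) (Fin n) ℝ :=
  fun i j => if j = i.rev then 1 else 0

namespace Fin

variable {M : Type*} [AddCommMonoid M] {n : ℕ}

theorem sum_filter_lt_sub_rev (f : Fin n → M) (k : ℕ) :
    ∑ i ∈ Finset.univ.filter (fun i : Fin n => (i : ℕ) < n - k), f i.rev
      = ∑ i ∈ Finset.univ.filter (fun i : Fin n => k ≤ (i : ℕ)), f i := by
  rw [Finset.sum_filter, Finset.sum_filter]
  refine Fintype.sum_equiv revPerm _ _ fun i => ?_
  simp only [revPerm_apply, val_rev]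
  congr 1
  simp only [eq_iff_iff]
  omega

theorem sum_filter_sub_le_rev (f : Fin n → M) (k : ℕ) :
    ∑ i ∈ Finset.univ.filter (fun i : Fin n => n - k ≤ (i : ℕ)), f i.rev
      = ∑ i ∈ Finset.univ.filter (fun i : Fin n => (i : ℕ) < k), f i := by
  rw [Finset.sum_filter, Finset.sum_filter]
  refine Fintype.sum_equiv revPerm _ _ fun i => ?_
  simp only [revPerm_apply, val_rev]
  congr 1
  simp only [eq_iff_iff]
  omega

end Fin

noncomputable def defect (t : ℝ) : ℝ := (1/2) * |t| ^ ((3:ℝ)/2) - |t|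

theorem vFun_sub_uFun (n k : ℕ) (x : EuclideanSpace ℝ (Fin n)) :
    vFun n k x - uFun n k x = 1/2 + ∑ i, defect (x i) := by
  have hrev (i : Fin n) : revVec x i = x i.rev := rfl
  simp only [uFun, vFun, hrev, Fin.sum_filter_lt_sub_rev (fun i => |x i|),
    Fin.sum_filter_sub_le_rev (fun i => (1/2) * |x i| ^ ((3:ℝ)/2))]
  rw [← Finset.sum_filter_add_sum_filter_not Finset.univ (fun i : Fin n => (i : ℕ) < k)]
  simp only [not_lt, defect, Finset.sum_sub_distrib]
  ring

@[simp]
theorem defect_zero : defect 0 = 0 := by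
  simp [defect, Real.zero_rpow]

theorem defect_of_abs_eq_one {t : ℝ} (ht : |t| = 1) : defect t = -(1/2) := by
  rw [defect, ht, Real.one_rpow]
  norm_num

theorem defect_neg {t : ℝ} (ht : |t| ≤ 1) (h0 : t ≠ 0) : defect t < 0 := by
  have hpos : 0 < |t| := abs_pos.mpr h0
  have hpow : |t| ^ ((3:ℝ)/2) ≤ |t| := by
    simpa using Real.rpow_le_rpow_of_exponent_ge hpos ht (by norm_num : (1:ℝ) ≤ 3/2)
  rw [defect]
  linarith

theorem defect_nonpos {t : ℝ} (ht : |t| ≤ 1) : defect t ≤ 0 := by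
  rcases eq_or_ne t 0 with rfl | h0
  · rw [defect_zero]
  · exact (defect_neg ht h0).le

theorem stmt12_general (n k : ℕ) :
    vFun n k 0 - uFun n k 0 = 1/2 ∧
    (∀ x : EuclideanSpace ℝ (Fin n), (∀ i, |x i| ≤ 1) → x ≠ 0 →
      vFun n k x - uFun n k x < 1/2) ∧
    (∀ x : EuclideanSpace ℝ (Fin n), (∀ i, |x i| ≤ 1) → (∃ j, |x j| = 1) →
      vFun n k x - uFun n k x ≤ 0) := by
  refine ⟨?_, fun x hx hne => ?_, fun x hx ⟨j, hj⟩ => ?_⟩ <;> rw [vFun_sub_uFun]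
  · simp
  · obtain ⟨i, hi⟩ : ∃ i, x i ≠ 0 := by
      by_contra! h
      exact hne (PiLp.ext h)
    have hsum : ∑ i, defect (x i) < 0 :=
      Finset.sum_neg' (fun i _ => defect_nonpos (hx i))
        ⟨i, Finset.mem_univ i, defect_neg (hx i) hi⟩
    linarith
  · have hsum : -defect (x j) ≤ ∑ i, -defect (x i) :=
      Finset.single_le_sum (fun i _ => neg_nonneg.mpr (defect_nonpos (hx i))) (Finset.mem_univ j)
    rw [Finset.sum_neg_distrib, defect_of_abs_eq_one hj] at hsum
    linarith

theorem stmt12 (n k : ℕ) (hn : 1 ≤ n) (hk : k ≤ n) :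
    vFun n k 0 - uFun n k 0 = 1/2 ∧
    (∀ x : EuclideanSpace ℝ (Fin n), (∀ i, |x i| ≤ 1) → x ≠ 0 →
      vFun n k x - uFun n k x < 1/2) ∧
    (∀ x : EuclideanSpace ℝ (Fin n), (∀ i, |x i| ≤ 1) → (∃ j, |x j| = 1) →
      vFun n k x - uFun n k x ≤ 0) :=
  stmt12_general n k
end

section
/- Fix n ≥ 1. Let w : ℝⁿ → ℝ be w(x) := |x|^{3/2}, where |x| is the Euclidean norm, and let f : ℝⁿ → ℝ be the continuous extension of x ↦ F(Hess w(x)) from ℝⁿ \ {0}, i.e. f(x) = arctan((3/4)|x|^{−1/2}) + (n−1)·arctan((3/2)|x|^{−1/2}) for x ≠ 0 and f(0) = nπ/2. Then w is a viscosity solution (both a viscosity subsolution and a viscosity supersolution) of F(Hess w) = f(x) in ℝⁿ. -/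
open Real Filter Topology

/-!
Away from the origin `w = ‖·‖ ^ (3/2)` is smooth and `D²w(x)(v, v) = b ‖v‖² - κ ⟪x, v⟫²` with
`b = (3/2) ‖x‖^(-1/2)` and `b - κ ‖x‖² = (3/4) ‖x‖^(-1/2)`: radial eigenvalue `b - κ ‖x‖²`,
tangential eigenvalue `b`. A `C²` function touching `w` from above has `D²φ(x) ≥ D²w(x)` as
quadratic forms, so all its eigenvalues are `≥ b - κ ‖x‖²`, and at most one is `< b` because the
form is `≥ b ‖·‖²` on `x^⊥`, which meets every plane. Touching from below gives all eigenvalues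
`≤ b`, and the Rayleigh quotient at `x` forces one of them `≤ b - κ ‖x‖²`. Monotonicity of
`arctan` then compares the sums. At the origin nothing `C²` touches `w` from above, since `w`
dominates `c ‖·‖²` near `0` for every `c`, and the supersolution inequality is `F < nπ/2`.
-/

section SecondDerivative

variable {E : Type*} [NormedAddCommGroup E] [NormedSpace ℝ E] {f g : E → ℝ} {x : E}

theorem deriv_deriv_comp_add_smul (hf : ContDiffAt ℝ 2 f x) (u : E) :
    deriv (deriv fun t : ℝ => f (x + t • u)) 0 = fderiv ℝ (fderiv ℝ f) x u u := by
  have hline : Tendsto (fun t : ℝ => x + t • u) (𝓝 0) (𝓝 x) := by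
    have hc : Continuous fun t : ℝ => x + t • u := by fun_prop
    simpa using hc.tendsto 0
  have hderiv : (deriv fun t : ℝ => f (x + t • u)) =ᶠ[𝓝 0]
      fun t => iteratedFDeriv ℝ 1 f (x + t • u) (fun _ => u) := by
    filter_upwards [hline.eventually (hf.eventually (by simp))] with t ht
    simpa using (ht.of_le (by norm_num) : ContDiffAt ℝ (0 + 1) f _).deriv_fderiv_add_smul
  have hf' : ContDiffAt ℝ (1 + 1) f (x + (0 : ℝ) • u) := by
    rw [zero_smul, add_zero]; exact hf.of_le (by norm_num)
  rw [hderiv.deriv_eq, hf'.deriv_fderiv_add_smul]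
  simp [iteratedFDeriv_two_apply]

theorem fderiv_fderiv_sub_apply (hf : ContDiffAt ℝ 2 f x) (hg : ContDiffAt ℝ 2 g x) (u v : E) :
    fderiv ℝ (fderiv ℝ (f - g)) x u v
      = fderiv ℝ (fderiv ℝ f) x u v - fderiv ℝ (fderiv ℝ g) x u v := by
  have h := congrArg (· ![u, v]) (iteratedFDeriv_sub_apply (i := 2) hf hg)
  simpa [iteratedFDeriv_two_apply] using h

theorem IsLocalMin.fderiv_fderiv_apply_self_nonneg (hmin : IsLocalMin f x)
    (hf : ContDiffAt ℝ 2 f x) (u : E) : 0 ≤ fderiv ℝ (fderiv ℝ f) x u u := by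
  set g : ℝ → ℝ := fun t => f (x + t • u)
  have hcont : ContinuousAt (fun t : ℝ => x + t • u) 0 := by fun_prop
  have hgmin : IsLocalMin g 0 := by
    apply IsLocalMin.comp_continuous (g := fun t : ℝ => x + t • u) _ hcont
    simpa using hmin
  rw [← deriv_deriv_comp_add_smul hf]
  by_contra! hneg
  have hgmax : IsLocalMax g 0 := isLocalMax_of_deriv_deriv_neg hneg hgmin.deriv_eq_zero
    (hf.continuousAt.comp_of_eq hcont (by simp))
  have hconst : g =ᶠ[𝓝 0] fun _ => g 0 := by
    filter_upwards [hgmin, hgmax] with t h₁ h₂ using le_antisymm h₂ h₁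
  have : deriv (deriv g) 0 = 0 := by
    rw [(hconst.deriv).deriv_eq]
    simp
  exact hneg.ne this

theorem fderiv_fderiv_apply_self_le_of_eventuallyLE (hf : ContDiffAt ℝ 2 f x)
    (hg : ContDiffAt ℝ 2 g x) (hle : f ≤ᶠ[𝓝 x] g) (heq : f x = g x) (u : E) :
    fderiv ℝ (fderiv ℝ f) x u u ≤ fderiv ℝ (fderiv ℝ g) x u u := by
  have hmin : IsLocalMin (g - f) x := by
    filter_upwards [hle] with y hy
    simp only [Pi.sub_apply, heq, sub_self]
    linarith
  have h := hmin.fderiv_fderiv_apply_self_nonneg (hg.sub hf) u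
  rw [fderiv_fderiv_sub_apply hg hf] at h
  linarith

end SecondDerivative

section NormRpow

variable {F : Type*} [NormedAddCommGroup F] [InnerProductSpace ℝ F] {x : F}

open scoped RealInnerProductSpace

theorem hasFDerivAt_norm_rpow_of_ne_zero (p : ℝ) (hx : x ≠ 0) :
    HasFDerivAt (fun y : F => ‖y‖ ^ p) ((p * ‖x‖ ^ (p - 2)) • innerSL ℝ x) x := by
  convert ((hasStrictFDerivAt_norm_sq x).hasFDerivAt.rpow_const (p := p / 2) (by simp [hx]))
    using 1
  · funext y
    rw [← Real.rpow_natCast_mul (norm_nonneg y)]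
    ring_nf
  · rw [← Real.rpow_natCast_mul (norm_nonneg x), ← Nat.cast_smul_eq_nsmul ℝ, smul_smul]
    ring_nf

theorem fderiv_fderiv_norm_rpow_apply {p : ℝ} (hp : 1 < p) (hx : x ≠ 0) (u v : F) :
    fderiv ℝ (fderiv ℝ fun y : F => ‖y‖ ^ p) x u v
      = p * ‖x‖ ^ (p - 2) * ⟪u, v⟫ + p * (p - 2) * ‖x‖ ^ (p - 4) * (⟪x, u⟫ * ⟪x, v⟫) := by
  have hgrad : (fderiv ℝ fun y : F => ‖y‖ ^ p) = fun y => (p * ‖y‖ ^ (p - 2)) • innerSL ℝ y := by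
    funext y
    exact fderiv_norm_rpow y hp
  have hcoef := (hasFDerivAt_norm_rpow_of_ne_zero (p - 2) hx).const_mul p
  have hD2 : HasFDerivAt (fun y => (p * ‖y‖ ^ (p - 2)) • innerSL ℝ y) _ x :=
    hcoef.smul (innerSL ℝ).hasFDerivAt
  rw [hgrad, hD2.fderiv]
  simp only [add_apply, smul_apply, ContinuousLinearMap.smulRight_apply, innerSL_apply_apply,
    smul_eq_mul]
  rw [innerSL_apply_apply]
  ring_nf

theorem contDiffAt_norm_rpow (p : ℝ) (hx : x ≠ 0) : ContDiffAt ℝ 2 (fun y : F => ‖y‖ ^ p) x :=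
  (contDiffAt_norm ℝ hx).rpow_const_of_ne (norm_ne_zero_iff.2 hx)

end NormRpow

section Hessian

variable {n : ℕ}

open scoped RealInnerProductSpace

theorem hess_apply (φ : EuclideanSpace ℝ (Fin n) → ℝ) (x : EuclideanSpace ℝ (Fin n)) (i j : Fin n) :
    hess φ x i j
      = fderiv ℝ (fderiv ℝ φ) x (EuclideanSpace.single i 1) (EuclideanSpace.single j 1) := by
  simp [hess, iteratedFDeriv_two_apply]

theorem isHermitian_hess {φ : EuclideanSpace ℝ (Fin n) → ℝ} {x : EuclideanSpace ℝ (Fin n)}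
    (hφ : ContDiffAt ℝ 2 φ x) : (hess φ x).IsHermitian := by
  ext i j
  simp only [Matrix.conjTranspose_apply, star_trivial, hess_apply]
  exact hφ.isSymmSndFDerivAt (by simp) _ _

theorem inner_toEuclideanLin_hess_self (φ : EuclideanSpace ℝ (Fin n) → ℝ)
    (x v : EuclideanSpace ℝ (Fin n)) :
    ⟪Matrix.toEuclideanLin (hess φ x) v, v⟫ = fderiv ℝ (fderiv ℝ φ) x v v := by
  conv_rhs => rw [← (EuclideanSpace.basisFun (Fin n) ℝ).sum_repr v]
  simp [map_sum, map_smul, PiLp.inner_apply, Matrix.mulVec, dotProduct, hess_apply,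
    Finset.mul_sum]
  rw [Finset.sum_comm]
  exact Finset.sum_congr rfl fun _ _ => Finset.sum_congr rfl fun _ _ => by ring

end Hessian

namespace Matrix.IsHermitian

open scoped RealInnerProductSpace

variable {ι : Type*} [Fintype ι] [DecidableEq ι] {M : Matrix ι ι ℝ} (hM : M.IsHermitian)

theorem toEuclideanLin_eigenvectorBasis (j : ι) :
    toEuclideanLin M (hM.eigenvectorBasis j) = hM.eigenvalues j • hM.eigenvectorBasis j := by
  ext i
  simpa using congrFun (hM.mulVec_eigenvectorBasis j) i

theorem inner_toEuclideanLin_self_eq_sum (v : EuclideanSpace ℝ ι) :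
    ⟪toEuclideanLin M v, v⟫ = ∑ i, hM.eigenvalues i * ⟪hM.eigenvectorBasis i, v⟫ ^ 2 := by
  have hTv : toEuclideanLin M v
      = ∑ i, (hM.eigenvalues i * ⟪hM.eigenvectorBasis i, v⟫) • hM.eigenvectorBasis i := by
    conv_lhs => rw [← hM.eigenvectorBasis.sum_repr' v]
    simp only [map_sum, map_smul, toEuclideanLin_eigenvectorBasis, smul_smul, mul_comm]
  rw [hTv, sum_inner]
  exact Finset.sum_congr rfl fun i _ => by rw [real_inner_smul_left]; ring

theorem eigenvalues_eq_inner_toEuclideanLin (j : ι) :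
    hM.eigenvalues j = ⟪toEuclideanLin M (hM.eigenvectorBasis j), hM.eigenvectorBasis j⟫ := by
  simp [toEuclideanLin_eigenvectorBasis, real_inner_smul_left]

theorem inner_toEuclideanLin_add_smul {j k : ι} (hjk : j ≠ k) (α β : ℝ) :
    ⟪toEuclideanLin M (α • hM.eigenvectorBasis j + β • hM.eigenvectorBasis k),
      α • hM.eigenvectorBasis j + β • hM.eigenvectorBasis k⟫
      = α ^ 2 * hM.eigenvalues j + β ^ 2 * hM.eigenvalues k := by
  have hon := hM.eigenvectorBasis.orthonormal
  simp only [map_add, map_smul, toEuclideanLin_eigenvectorBasis, inner_add_left, inner_add_right,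
    real_inner_smul_left, real_inner_smul_right, real_inner_self_eq_norm_sq, hon.1,
    hon.2 hjk, hon.2 hjk.symm]
  ring

theorem norm_add_smul_sq {j k : ι} (hjk : j ≠ k) (α β : ℝ) :
    ‖α • hM.eigenvectorBasis j + β • hM.eigenvectorBasis k‖ ^ 2 = α ^ 2 + β ^ 2 := by
  have hon := hM.eigenvectorBasis.orthonormal
  rw [norm_add_sq_real, norm_smul, norm_smul, hon.1, hon.1, real_inner_smul_left,
    real_inner_smul_right, hon.2 hjk]
  simp

variable {x : EuclideanSpace ℝ ι} {b κ : ℝ}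

theorem le_eigenvalues_of_forall_le (hκ : 0 ≤ κ)
    (hQ : ∀ v, b * ‖v‖ ^ 2 - κ * ⟪x, v⟫ ^ 2 ≤ ⟪toEuclideanLin M v, v⟫) (i : ι) :
    b - κ * ‖x‖ ^ 2 ≤ hM.eigenvalues i := by
  have hu : ‖hM.eigenvectorBasis i‖ = 1 := hM.eigenvectorBasis.orthonormal.1 i
  have hcs : ⟪x, hM.eigenvectorBasis i⟫ ^ 2 ≤ ‖x‖ ^ 2 := by
    rw [sq]; simpa [hu] using real_inner_mul_inner_self_le x (hM.eigenvectorBasis i)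
  have := hQ (hM.eigenvectorBasis i)
  rw [hu, ← eigenvalues_eq_inner_toEuclideanLin] at this
  nlinarith

theorem le_eigenvalues_of_ne (hQ : ∀ v, b * ‖v‖ ^ 2 - κ * ⟪x, v⟫ ^ 2 ≤ ⟪toEuclideanLin M v, v⟫)
    {j k : ι} (hjk : j ≠ k) (hj : hM.eigenvalues j < b) : b ≤ hM.eigenvalues k := by
  by_contra! hk
  set cj := ⟪x, hM.eigenvectorBasis j⟫
  set ck := ⟪x, hM.eigenvectorBasis k⟫
  -- coefficients of a nonzero vector of the plane of the two eigenvectors, orthogonal to `x`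
  obtain ⟨α, β, hαβ, horth⟩ : ∃ α β : ℝ, 0 < α ^ 2 + β ^ 2 ∧ α * cj + β * ck = 0 := by
    by_cases hcj : cj = 0
    · exact ⟨1, 0, by norm_num, by simp [hcj]⟩
    · exact ⟨ck, -cj, by nlinarith [sq_pos_of_ne_zero hcj, sq_nonneg ck], by ring⟩
  have := hQ (α • hM.eigenvectorBasis j + β • hM.eigenvectorBasis k)
  rw [hM.inner_toEuclideanLin_add_smul hjk, hM.norm_add_smul_sq hjk, inner_add_right,
    real_inner_smul_right, real_inner_smul_right, horth] at this
  have hlt : α ^ 2 * hM.eigenvalues j + β ^ 2 * hM.eigenvalues k < b * (α ^ 2 + β ^ 2) := by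
    rcases eq_or_ne α 0 with rfl | hα
    · nlinarith [mul_lt_mul_of_pos_left hk (by simpa using hαβ : 0 < β ^ 2)]
    · nlinarith [mul_lt_mul_of_pos_left hj (sq_pos_of_ne_zero hα),
        mul_le_mul_of_nonneg_left hk.le (sq_nonneg β)]
  linarith

theorem eigenvalues_le_of_forall_le (hκ : 0 ≤ κ)
    (hQ : ∀ v, ⟪toEuclideanLin M v, v⟫ ≤ b * ‖v‖ ^ 2 - κ * ⟪x, v⟫ ^ 2) (i : ι) :
    hM.eigenvalues i ≤ b := by
  have := hQ (hM.eigenvectorBasis i)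
  rw [hM.eigenvectorBasis.orthonormal.1 i, ← eigenvalues_eq_inner_toEuclideanLin] at this
  nlinarith [sq_nonneg ⟪x, hM.eigenvectorBasis i⟫]

theorem exists_eigenvalues_le (hx : x ≠ 0)
    (hQ : ∀ v, ⟪toEuclideanLin M v, v⟫ ≤ b * ‖v‖ ^ 2 - κ * ⟪x, v⟫ ^ 2) :
    ∃ i, hM.eigenvalues i ≤ b - κ * ‖x‖ ^ 2 := by
  set a := b - κ * ‖x‖ ^ 2
  by_contra! hlt
  have hc : ∃ i, ⟪hM.eigenvectorBasis i, x⟫ ≠ 0 := by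
    by_contra! h0
    exact hx (by simpa [h0] using (hM.eigenvectorBasis.sum_repr' x).symm)
  have hsum : a * ‖x‖ ^ 2 < ⟪toEuclideanLin M x, x⟫ := by
    rw [hM.inner_toEuclideanLin_self_eq_sum, ← hM.eigenvectorBasis.sum_sq_inner_right x,
      Finset.mul_sum]
    obtain ⟨i, hi⟩ := hc
    refine Finset.sum_lt_sum (fun i _ => by gcongr; exact (hlt i).le) ⟨i, Finset.mem_univ _, ?_⟩
    exact mul_lt_mul_of_pos_right (hlt i) (by positivity)
  have := hQ x
  rw [real_inner_self_eq_norm_sq] at this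
  nlinarith

end Matrix.IsHermitian

theorem Fin.natCast_card_univ_erase {n : ℕ} (i₀ : Fin n) :
    ((Finset.univ.erase i₀).card : ℝ) = n - 1 := by
  rw [Finset.card_erase_of_mem (Finset.mem_univ _), Finset.card_univ, Fintype.card_fin,
    Nat.cast_pred i₀.pos]

section MonotoneSum

variable {g : ℝ → ℝ} {n : ℕ} {μ : Fin n → ℝ} {a b : ℝ} {i₀ : Fin n}

theorem Monotone.add_mul_le_sum_comp (hg : Monotone g) (h₀ : a ≤ μ i₀)
    (h : ∀ i, i ≠ i₀ → b ≤ μ i) : g a + (n - 1) * g b ≤ ∑ i, g (μ i) := by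
  rw [← Finset.add_sum_erase _ _ (Finset.mem_univ i₀), ← Fin.natCast_card_univ_erase i₀,
    ← nsmul_eq_mul]
  exact add_le_add (hg h₀)
    (Finset.card_nsmul_le_sum _ _ _ fun i hi => hg (h i (Finset.ne_of_mem_erase hi)))

theorem Monotone.sum_comp_le_add_mul (hg : Monotone g) (h₀ : μ i₀ ≤ a) (h : ∀ i, μ i ≤ b) :
    ∑ i, g (μ i) ≤ g a + (n - 1) * g b := by
  rw [← Finset.add_sum_erase _ _ (Finset.mem_univ i₀), ← Fin.natCast_card_univ_erase i₀,
    ← nsmul_eq_mul]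
  exact add_le_add (hg h₀) (Finset.sum_le_card_nsmul _ _ _ fun i _ => hg (h i))

end MonotoneSum

section SpecialLagrangian

open scoped RealInnerProductSpace

variable {n : ℕ} {M : Matrix (Fin n) (Fin n) ℝ}

theorem slF_eq_sum (hM : M.IsHermitian) : slF M = ∑ i, arctan (hM.eigenvalues i) := by
  rw [slF, dif_pos hM]

theorem slF_le (M : Matrix (Fin n) (Fin n) ℝ) : slF M ≤ n * (π / 2) := by
  unfold slF
  split_ifs with hM
  · calc ∑ i, arctan (hM.eigenvalues i) ≤ ∑ _i : Fin n, π / 2 :=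
          Finset.sum_le_sum fun i _ => (arctan_lt_pi_div_two _).le
      _ = n * (π / 2) := by simp
  · positivity

variable {x : EuclideanSpace ℝ (Fin n)} {b κ : ℝ}

theorem arctan_add_mul_arctan_le_slF (hn : 1 ≤ n) (hM : M.IsHermitian) (hκ : 0 ≤ κ)
    (hQ : ∀ v, b * ‖v‖ ^ 2 - κ * ⟪x, v⟫ ^ 2 ≤ ⟪Matrix.toEuclideanLin M v, v⟫) :
    arctan (b - κ * ‖x‖ ^ 2) + (n - 1) * arctan b ≤ slF M := by
  rw [slF_eq_sum hM]
  by_cases hex : ∃ j, hM.eigenvalues j < b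
  · obtain ⟨j, hj⟩ := hex
    exact arctan_strictMono.monotone.add_mul_le_sum_comp (hM.le_eigenvalues_of_forall_le hκ hQ j)
      fun k hk => hM.le_eigenvalues_of_ne hQ (Ne.symm hk) hj
  · push Not at hex
    have hab : b - κ * ‖x‖ ^ 2 ≤ b := by nlinarith [sq_nonneg ‖x‖]
    exact arctan_strictMono.monotone.add_mul_le_sum_comp (i₀ := ⟨0, hn⟩) (hab.trans (hex _))
      fun k _ => hex k

theorem slF_le_arctan_add_mul_arctan (hM : M.IsHermitian) (hx : x ≠ 0) (hκ : 0 ≤ κ)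
    (hQ : ∀ v, ⟪Matrix.toEuclideanLin M v, v⟫ ≤ b * ‖v‖ ^ 2 - κ * ⟪x, v⟫ ^ 2) :
    slF M ≤ arctan (b - κ * ‖x‖ ^ 2) + (n - 1) * arctan b := by
  obtain ⟨i₀, hi₀⟩ := hM.exists_eigenvalues_le hx hQ
  rw [slF_eq_sum hM]
  exact arctan_strictMono.monotone.sum_comp_le_add_mul hi₀ (hM.eigenvalues_le_of_forall_le hκ hQ)

end SpecialLagrangian

section Origin

open scoped RealInnerProductSpace

theorem eventually_mul_norm_sq_le_norm_rpow {E : Type*} [SeminormedAddCommGroup E] {p : ℝ}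
    (hp : p < 2) (c : ℝ) : ∀ᶠ y in 𝓝 (0 : E), c * ‖y‖ ^ 2 ≤ ‖y‖ ^ p := by
  have hlim : Tendsto (fun y : E => c * ‖y‖ ^ (2 - p)) (𝓝 0) (𝓝 0) := by
    have hcont : Continuous fun y : E => c * ‖y‖ ^ (2 - p) :=
      continuous_const.mul (continuous_norm.rpow_const fun _ => Or.inr (by linarith))
    simpa [Real.zero_rpow (by linarith : 2 - p ≠ 0)] using hcont.tendsto 0
  filter_upwards [hlim.eventually (gt_mem_nhds one_pos)] with y hy
  calc c * ‖y‖ ^ 2 = c * ‖y‖ ^ (2 - p) * ‖y‖ ^ p := by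
        rw [mul_assoc, ← Real.rpow_add' (norm_nonneg y) (by norm_num), sub_add_cancel,
          Real.rpow_two]
    _ ≤ 1 * ‖y‖ ^ p := by gcongr
    _ = ‖y‖ ^ p := one_mul _

variable {F : Type*} [NormedAddCommGroup F] [InnerProductSpace ℝ F]

theorem fderiv_fderiv_const_mul_norm_sq_apply (c : ℝ) (x u v : F) :
    fderiv ℝ (fderiv ℝ fun y : F => c * ‖y‖ ^ 2) x u v = 2 * c * ⟪u, v⟫ := by
  have hgrad : (fderiv ℝ fun y : F => c * ‖y‖ ^ 2) = ⇑((2 * c) • innerSL ℝ (E := F)) := by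
    funext y
    rw [fderiv_const_mul (contDiff_norm_sq ℝ).differentiable_one.differentiableAt,
      fderiv_norm_sq_apply]
    ext w
    simp only [smul_apply, smul_eq_mul, nsmul_eq_mul]
    ring
  rw [hgrad, ContinuousLinearMap.fderiv]
  rfl

theorem not_eventually_norm_rpow_le [Nontrivial F] {p : ℝ} (hp : p < 2) {φ : F → ℝ}
    (hφ : ContDiffAt ℝ 2 φ 0) (h0 : φ 0 = 0) : ¬ ∀ᶠ y in 𝓝 0, ‖y‖ ^ p ≤ φ y := by
  intro hle
  obtain ⟨e, he⟩ := exists_norm_eq F zero_le_one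
  obtain ⟨A, hA⟩ : ∃ A, fderiv ℝ (fderiv ℝ φ) 0 e e = A := ⟨_, rfl⟩
  -- `φ` lies above `c ‖·‖ ^ 2` near `0` for every `c`, so `D²φ(0)(e, e) ≥ 2c`
  have hbelow : ∀ᶠ y in 𝓝 0, (|A| + 1) * ‖y‖ ^ 2 ≤ φ y :=
    ((eventually_mul_norm_sq_le_norm_rpow hp _).and hle).mono fun y hy => hy.1.trans hy.2
  have hcmp := fderiv_fderiv_apply_self_le_of_eventuallyLE
    (contDiffAt_const.mul (contDiff_norm_sq ℝ).contDiffAt) hφ hbelow (by simp [h0]) e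
  rw [fderiv_fderiv_const_mul_norm_sq_apply, real_inner_self_eq_norm_sq, he, one_pow, hA] at hcmp
  linarith [le_abs_self A, abs_nonneg A]

end Origin

section ThreeHalves

open scoped RealInnerProductSpace

theorem fderiv_fderiv_norm_rpow_three_halves_apply_self {F : Type*} [NormedAddCommGroup F]
    [InnerProductSpace ℝ F] {x : F} (hx : x ≠ 0) (v : F) :
    fderiv ℝ (fderiv ℝ fun y : F => ‖y‖ ^ ((3 : ℝ) / 2)) x v v
      = 3 / 2 * ‖x‖ ^ (-(1 : ℝ) / 2) * ‖v‖ ^ 2 - 3 / 4 * ‖x‖ ^ (-(5 : ℝ) / 2) * ⟪x, v⟫ ^ 2 := by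
  rw [fderiv_fderiv_norm_rpow_apply (by norm_num) hx, real_inner_self_eq_norm_sq]
  norm_num
  ring

theorem three_halves_sub_mul_norm_sq {F : Type*} [NormedAddCommGroup F] {x : F} (hx : x ≠ 0) :
    3 / 2 * ‖x‖ ^ (-(1 : ℝ) / 2) - 3 / 4 * ‖x‖ ^ (-(5 : ℝ) / 2) * ‖x‖ ^ 2
      = 3 / 4 * ‖x‖ ^ (-(1 : ℝ) / 2) := by
  rw [mul_assoc, ← Real.rpow_two, ← Real.rpow_add (norm_pos_iff.2 hx)]
  norm_num
  ring

variable {n : ℕ} {x : EuclideanSpace ℝ (Fin n)}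

theorem arctan_add_mul_arctan_le_slF_hess (hn : 1 ≤ n) (hx : x ≠ 0)
    {φ : EuclideanSpace ℝ (Fin n) → ℝ} (hφ : ContDiffAt ℝ 2 φ x)
    (hle : ∀ᶠ y in 𝓝 x, ‖y‖ ^ ((3 : ℝ) / 2) ≤ φ y) (heq : φ x = ‖x‖ ^ ((3 : ℝ) / 2)) :
    arctan (3 / 4 * ‖x‖ ^ (-(1 : ℝ) / 2)) + (n - 1) * arctan (3 / 2 * ‖x‖ ^ (-(1 : ℝ) / 2))
      ≤ slF (hess φ x) := by
  have hcmp := fderiv_fderiv_apply_self_le_of_eventuallyLE (contDiffAt_norm_rpow _ hx) hφ hle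
    heq.symm
  have h := arctan_add_mul_arctan_le_slF hn (isHermitian_hess hφ) (x := x)
    (b := 3 / 2 * ‖x‖ ^ (-(1 : ℝ) / 2)) (κ := 3 / 4 * ‖x‖ ^ (-(5 : ℝ) / 2)) (by positivity)
    fun v => by
      rw [inner_toEuclideanLin_hess_self, ← fderiv_fderiv_norm_rpow_three_halves_apply_self hx]
      exact hcmp v
  rwa [three_halves_sub_mul_norm_sq hx] at h

theorem slF_hess_le_arctan_add_mul_arctan (hx : x ≠ 0)
    {ψ : EuclideanSpace ℝ (Fin n) → ℝ} (hψ : ContDiffAt ℝ 2 ψ x)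
    (hle : ∀ᶠ y in 𝓝 x, ψ y ≤ ‖y‖ ^ ((3 : ℝ) / 2)) (heq : ψ x = ‖x‖ ^ ((3 : ℝ) / 2)) :
    slF (hess ψ x) ≤
      arctan (3 / 4 * ‖x‖ ^ (-(1 : ℝ) / 2)) + (n - 1) * arctan (3 / 2 * ‖x‖ ^ (-(1 : ℝ) / 2)) := by
  have hcmp := fderiv_fderiv_apply_self_le_of_eventuallyLE hψ (contDiffAt_norm_rpow _ hx) hle heq
  have h := slF_le_arctan_add_mul_arctan (isHermitian_hess hψ) hx
    (b := 3 / 2 * ‖x‖ ^ (-(1 : ℝ) / 2)) (κ := 3 / 4 * ‖x‖ ^ (-(5 : ℝ) / 2)) (by positivity)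
    fun v => by
      rw [inner_toEuclideanLin_hess_self, ← fderiv_fderiv_norm_rpow_three_halves_apply_self hx]
      exact hcmp v
  rwa [three_halves_sub_mul_norm_sq hx] at h

end ThreeHalves

open scoped Classical in
theorem stmt14 (n : ℕ) (hn : 1 ≤ n) :
    IsSubsolution Set.univ (fun x : EuclideanSpace ℝ (Fin n) => ‖x‖ ^ ((3:ℝ)/2))
      (fun x => if x = 0 then n * (π / 2)
        else Real.arctan ((3/4) * ‖x‖ ^ (-(1:ℝ)/2))
          + ((n : ℝ) - 1) * Real.arctan ((3/2) * ‖x‖ ^ (-(1:ℝ)/2))) ∧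
    IsSupersolution Set.univ (fun x : EuclideanSpace ℝ (Fin n) => ‖x‖ ^ ((3:ℝ)/2))
      (fun x => if x = 0 then n * (π / 2)
        else Real.arctan ((3/4) * ‖x‖ ^ (-(1:ℝ)/2))
          + ((n : ℝ) - 1) * Real.arctan ((3/2) * ‖x‖ ^ (-(1:ℝ)/2))) := by
  refine ⟨fun x _ φ hφ hle heq => ?_, fun x _ ψ hψ hle heq => ?_⟩ <;> dsimp only at hle heq ⊢
  · split_ifs with hx
    · subst hx
      have : NeZero n := ⟨by omega⟩
      exact absurd hle (not_eventually_norm_rpow_le (by norm_num) hφ (by simpa using heq))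
    · exact arctan_add_mul_arctan_le_slF_hess hn hx hφ hle heq
  · split_ifs with hx
    · exact slF_le _
    · exact slF_hess_le_arctan_add_mul_arctan hx hψ hle heq
end
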